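/- Let T = [[A, B], [C, D]] ∈ U(c,d) with c ≥ d and D the d×d lower-right block. Then for i = 1,...,d, the singular values satisfy σ_i(D) = (σ_i(T) + σ_i(T)^{-1})/2, where σ_i denotes the i-th largest singular value. -/

import Mathlib

open Matrix MeasureTheory Filter
open scoped ComplexOrder
noncomputable section

/-- The singular values of a complex square matrix indexed by `Fin n`,
listed in decreasing order (`sv T 0` is the largest). -/
def sv {n : ℕ} (T : Matrix (Fin n) (Fin n) ℂ) : Fin n → ℝ := fun i =>
  let ev := (Matrix.isHermitian_conjTranspose_mul_self T).eigenvalues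
  Real.sqrt (ev (Tuple.sort ev i.rev))

/-- The hermitian form matrix `G_{c,d} = diag(1_c, -1_d)`. -/
def Gcd (c d : ℕ) : Matrix (Fin c ⊕ Fin d) (Fin c ⊕ Fin d) ℂ :=
  Matrix.fromBlocks 1 0 0 (-1)

/-- The pseudo-unitary group `U(c,d) = {T : Tᴴ G_{c,d} T = G_{c,d}}`. -/
def pseudoU (c d : ℕ) : Set (Matrix (Fin c ⊕ Fin d) (Fin c ⊕ Fin d) ℂ) :=
  { T | Tᴴ * Gcd c d * T = Gcd c d }

/-- Singular values, in decreasing order, of a matrix indexed by `Fin c ⊕ Fin d`. -/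
def svS {c d : ℕ} (T : Matrix (Fin c ⊕ Fin d) (Fin c ⊕ Fin d) ℂ) : Fin (c + d) → ℝ :=
  sv (T.submatrix finSumFinEquiv.symm finSumFinEquiv.symm)

/-- `N_r(T) = Σ_{i=1}^r ln((σ_i(T) + σ_i(T)⁻¹)/2)` for decreasingly ordered singular values. -/
def NS {c d : ℕ} (r : ℕ) (T : Matrix (Fin c ⊕ Fin d) (Fin c ⊕ Fin d) ℂ) : ℝ :=
  ∑ i : Fin (c + d), if (i : ℕ) < r then Real.log ((svS T i + (svS T i)⁻¹) / 2) else 0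

/-- The unitary `U_θ^{(c,d)} = diag(e^{2πiθ} 1_c, 1_d)`. -/
def Umat (c d : ℕ) (θ : ℝ) : Matrix (Fin c ⊕ Fin d) (Fin c ⊕ Fin d) ℂ :=
  Matrix.fromBlocks (Complex.exp (((2 * Real.pi * θ : ℝ) : ℂ) * Complex.I) • 1) 0 0 1

/-- The symplectic form matrix `J = [[0, 1_d], [-1_d, 0]]`. -/
def Jmat (d : ℕ) : Matrix (Fin d ⊕ Fin d) (Fin d ⊕ Fin d) ℂ :=
  Matrix.fromBlocks 0 1 (-1) 0

/-- The hermitian-symplectic group `HSp(2d) = {T : Tᴴ J T = J}`. -/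
def HSp (d : ℕ) : Set (Matrix (Fin d ⊕ Fin d) (Fin d ⊕ Fin d) ℂ) :=
  { T | Tᴴ * Jmat d * T = Jmat d }

/-- The Cayley transform `C = (1/√2)[[1, i·1],[1, -i·1]]`. -/
def Cayley (d : ℕ) : Matrix (Fin d ⊕ Fin d) (Fin d ⊕ Fin d) ℂ :=
  ((Real.sqrt 2 : ℂ))⁻¹ • Matrix.fromBlocks 1 (Complex.I • 1) 1 ((-Complex.I) • 1)

/-- The rotation matrix `R_θ = [[cos(πθ)1, -sin(πθ)1],[sin(πθ)1, cos(πθ)1]]`. -/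
def Rrot (d : ℕ) (θ : ℝ) : Matrix (Fin d ⊕ Fin d) (Fin d ⊕ Fin d) ℂ :=
  Matrix.fromBlocks ((Real.cos (Real.pi * θ) : ℂ) • 1) (-((Real.sin (Real.pi * θ) : ℂ) • 1))
    ((Real.sin (Real.pi * θ) : ℂ) • 1) ((Real.cos (Real.pi * θ) : ℂ) • 1)

/-- The spectral radius of the `d`-th exterior power: the product of the `d` largest
absolute values of eigenvalues (roots of the characteristic polynomial, with
algebraic multiplicity). -/
def rhoLam {m : Type*} [Fintype m] [DecidableEq m] (d : ℕ) (M : Matrix m m ℂ) : ℝ :=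
  (((M.charpoly.roots.map (fun z : ℂ => ‖z‖)).sort (· ≥ ·)).take d).prod

/-- `‖Λ^r T‖`: the product of the `r` largest singular values of `T`. -/
def normLam {c d : ℕ} (r : ℕ) (T : Matrix (Fin c ⊕ Fin d) (Fin c ⊕ Fin d) ℂ) : ℝ :=
  ∏ i : Fin (c + d), if (i : ℕ) < r then svS T i else 1

/-- The Möbius action `T · M = (AM + B)(CM + D)⁻¹` of a block matrix on `c × d` matrices. -/
def mob {c d : ℕ} (T : Matrix (Fin c ⊕ Fin d) (Fin c ⊕ Fin d) ℂ)
    (M : Matrix (Fin c) (Fin d) ℂ) : Matrix (Fin c) (Fin d) ℂ :=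
  (T.toBlocks₁₁ * M + T.toBlocks₁₂) * (T.toBlocks₂₁ * M + T.toBlocks₂₂)⁻¹

/-- The cocycle `B_n(x) = B(f^{n-1}x) ⋯ B(fx) B(x)`. -/
def cocycle {X : Type*} {m : Type*} [Fintype m] [DecidableEq m]
    (f : X → X) (B : X → Matrix m m ℂ) (x : X) : ℕ → Matrix m m ℂ
  | 0 => 1
  | n + 1 => B (f^[n] x) * cocycle f B x n

/-!
Let `S = Tᴴ T`. As `T` preserves `G = diag(1, -1)`, `T⁻¹ = G Tᴴ G` and hence `S⁻¹ = G S G`.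
Conjugation by `G` flips the sign of the off-diagonal blocks, so `S + S⁻¹` is block diagonal; the
block relations of `Tᴴ G T = G` and `T G Tᴴ = G` identify its blocks with `2 + 4 Cᴴ C` and
`4 Dᴴ D - 2`, and `Cᴴ C` has the spectrum of `C Cᴴ = D Dᴴ - 1` padded by `c - d` zeros. Hence, with
`λ` running over the spectrum of `S` and `μ` over that of `Dᴴ D`, the values `λ + λ⁻¹` are the
values `4 μ - 2`, each taken twice, together with `c - d` copies of `2`.

Since `S⁻¹ = G S G` has the spectrum of `S`, the decreasing enumeration `λ₀ ≥ λ₁ ≥ ⋯` satisfies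
`λ_{c+d-1-k} = λ_k⁻¹`, so `λ_k ≥ 1` on the first half. Visiting the indices in the order
`0, c+d-1, 1, c+d-2, …` shows that `k ↦ λ_{⌊k/2⌋} + λ_{⌊k/2⌋}⁻¹` is a decreasing enumeration of the
multiset above, hence equals `4 μ_{⌊k/2⌋} - 2` for `k < 2d`. At `k = 2i` this reads
`σ_i(T)² + σ_i(T)⁻² = 4 σ_i(D)² - 2`.
-/

section SpectralMapping
open Polynomial

namespace Matrix.IsHermitian
variable {𝕜 ι m : Type*} [RCLike 𝕜] [Fintype ι] [Fintype m] [DecidableEq ι] [DecidableEq m]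
  {A B : Matrix ι ι 𝕜}

lemma roots_charpoly_eq_map_ofReal (hA : A.IsHermitian) :
    A.charpoly.roots = (Finset.univ.val.map hA.eigenvalues).map ((↑) : ℝ → 𝕜) := by
  rw [hA.roots_charpoly_eq_eigenvalues, Multiset.map_map]

lemma map_eigenvalues_eq_of_charpoly_eq {B : Matrix m m 𝕜} (hA : A.IsHermitian)
    (hB : B.IsHermitian) (h : A.charpoly = B.charpoly) :
    Finset.univ.val.map hA.eigenvalues = Finset.univ.val.map hB.eigenvalues :=
  Multiset.map_injective (RCLike.ofReal_injective (K := 𝕜)) <| by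
    rw [← hA.roots_charpoly_eq_map_ofReal, ← hB.roots_charpoly_eq_map_ofReal, h]

lemma roots_charpoly_cfc (hA : A.IsHermitian) (f : ℝ → ℝ) :
    (cfc f A).charpoly.roots = (Finset.univ.val.map hA.eigenvalues).map (fun x => (f x : 𝕜)) := by
  rw [hA.charpoly_cfc_eq,
    roots_prod _ _ (Finset.prod_ne_zero_iff.mpr fun i _ => X_sub_C_ne_zero _)]
  simp [Multiset.map_map]

lemma roots_charpoly_smul_one_add_smul (hA : A.IsHermitian) (a b : ℝ) :
    ((a : 𝕜) • (1 : Matrix ι ι 𝕜) + (b : 𝕜) • A).charpoly.roots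
      = A.charpoly.roots.map (fun z => (a : 𝕜) + b * z) := by
  have hcfc : cfc (fun x => a + b * x) A = (a : 𝕜) • (1 : Matrix ι ι 𝕜) + (b : 𝕜) • A := by
    rw [cfc_const_add _ _ _ (by fun_prop) hA.isSelfAdjoint, cfc_const_mul_id _ _ hA.isSelfAdjoint,
      Algebra.algebraMap_eq_smul_one, RCLike.real_smul_eq_coe_smul (K := 𝕜),
      RCLike.real_smul_eq_coe_smul (K := 𝕜)]
  rw [← hcfc, hA.roots_charpoly_cfc, hA.roots_charpoly_eq_map_ofReal, Multiset.map_map]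
  simp

lemma cfc_inv_eq_of_mul_eq_one (hA : A.IsHermitian) (h : A * B = 1) :
    cfc (fun x : ℝ => x⁻¹) A = B := by
  rw [cfc_ringInverse_id A (IsUnit.of_mul_eq_one B h) hA.isSelfAdjoint,
    ← nonsing_inv_eq_ringInverse, inv_eq_right_inv h]

lemma cfc_add_inv_eq_of_mul_eq_one (hA : A.IsHermitian) (h : A * B = 1) :
    cfc (fun x : ℝ => x + x⁻¹) A = A + B := by
  rw [cfc_add A _ _ (by fun_prop) (A.finite_real_spectrum.continuousOn _),
    cfc_id' ℝ A hA.isSelfAdjoint, hA.cfc_inv_eq_of_mul_eq_one h]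

end Matrix.IsHermitian

namespace Matrix
variable {𝕜 m n : Type*} [RCLike 𝕜] [Fintype m] [Fintype n] [DecidableEq m] [DecidableEq n]

lemma roots_charpoly_fromBlocks_zero (P : Matrix m m 𝕜) (Q : Matrix n n 𝕜) :
    (fromBlocks P 0 0 Q).charpoly.roots = P.charpoly.roots + Q.charpoly.roots := by
  rw [charpoly_fromBlocks_zero₁₂, roots_mul ((charpoly_monic P).mul (charpoly_monic Q)).ne_zero]

lemma roots_charpoly_conjTranspose_mul_self (C : Matrix n m 𝕜)
    (h : Fintype.card n ≤ Fintype.card m) :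
    (Cᴴ * C).charpoly.roots
      = (C * Cᴴ).charpoly.roots + Multiset.replicate (Fintype.card m - Fintype.card n) 0 := by
  rw [charpoly_mul_comm_of_le _ _ h, roots_mul ((monic_X_pow _).mul (charpoly_monic _)).ne_zero,
    roots_X_pow, add_comm, Multiset.nsmul_singleton]

lemma map_eigenvalues_conjTranspose_mul_self_submatrix {ι κ : Type*} [Fintype ι] [Fintype κ]
    [DecidableEq ι] [DecidableEq κ] (T : Matrix ι ι 𝕜) (e : κ ≃ ι) :
    Finset.univ.val.map (isHermitian_conjTranspose_mul_self (T.submatrix e e)).eigenvalues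
      = Finset.univ.val.map (isHermitian_conjTranspose_mul_self T).eigenvalues := by
  refine IsHermitian.map_eigenvalues_eq_of_charpoly_eq _ _ ?_
  rw [conjTranspose_submatrix, submatrix_mul_equiv, ← charpoly_reindex e.symm]
  rfl

end Matrix

end SpectralMapping

namespace Matrix
variable {𝕜 ι m n : Type*} [RCLike 𝕜] [Fintype ι] [Fintype m] [Fintype n] [DecidableEq ι]
  [DecidableEq m] [DecidableEq n]

section FormPreserving
variable {G T : Matrix ι ι 𝕜}

lemma conj_conjTranspose_mul_eq_one (hG : G * G = 1) (hT : Tᴴ * G * T = G) :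
    G * Tᴴ * G * T = 1 :=
  calc G * Tᴴ * G * T = G * (Tᴴ * G * T) := by simp only [Matrix.mul_assoc]
    _ = 1 := by rw [hT, hG]

lemma isUnit_of_conjTranspose_mul_mul_eq (hG : G * G = 1) (hT : Tᴴ * G * T = G) : IsUnit T :=
  IsUnit.of_mul_eq_one _ (mul_eq_one_comm.mp (conj_conjTranspose_mul_eq_one hG hT))

lemma mul_mul_conjTranspose_eq (hG : G * G = 1) (hT : Tᴴ * G * T = G) : T * G * Tᴴ = G :=
  calc T * G * Tᴴ = T * (G * Tᴴ * G) * G := by simp only [Matrix.mul_assoc, hG, Matrix.mul_one]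
    _ = G := by rw [mul_eq_one_comm.mp (conj_conjTranspose_mul_eq_one hG hT), Matrix.one_mul]

lemma conjTranspose_mul_self_mul_conj_eq_one (hG : G * G = 1) (hT : Tᴴ * G * T = G) :
    Tᴴ * T * (G * (Tᴴ * T) * G) = 1 :=
  calc Tᴴ * T * (G * (Tᴴ * T) * G) = Tᴴ * (T * G * Tᴴ) * T * G := by
        simp only [Matrix.mul_assoc]
    _ = 1 := by rw [mul_mul_conjTranspose_eq hG hT, hT, hG]

lemma map_inv_eigenvalues_conjTranspose_mul_self (hG : G * G = 1) (hT : Tᴴ * G * T = G) :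
    (Finset.univ.val.map (isHermitian_conjTranspose_mul_self T).eigenvalues).map (·⁻¹)
      = Finset.univ.val.map (isHermitian_conjTranspose_mul_self T).eigenvalues := by
  have hS := isHermitian_conjTranspose_mul_self T
  apply Multiset.map_injective (RCLike.ofReal_injective (K := 𝕜))
  rw [Multiset.map_map, ← hS.roots_charpoly_eq_map_ofReal]
  calc _ = (cfc (fun x : ℝ => x⁻¹) (Tᴴ * T)).charpoly.roots := by
        rw [hS.roots_charpoly_cfc]; rfl
    _ = (Tᴴ * T).charpoly.roots := by
      rw [hS.cfc_inv_eq_of_mul_eq_one (conjTranspose_mul_self_mul_conj_eq_one hG hT),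
        Matrix.mul_assoc, charpoly_mul_comm, Matrix.mul_assoc, hG, Matrix.mul_one]

end FormPreserving

lemma eigenvalues_conjTranspose_mul_self_pos {T : Matrix ι ι 𝕜} (hT : IsUnit T) (j : ι) :
    0 < (isHermitian_conjTranspose_mul_self T).eigenvalues j :=
  (PosDef.conjTranspose_mul_self T (mulVec_injective_iff_isUnit.mpr hT)).eigenvalues_pos j

lemma one_le_eigenvalues_conjTranspose_mul_self {κ : Type*} [Fintype κ] {B : Matrix κ n 𝕜}
    {D : Matrix n n 𝕜} (h : Dᴴ * D = 1 + Bᴴ * B) (j : n) :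
    1 ≤ (isHermitian_conjTranspose_mul_self D).eigenvalues j := by
  have hB := isHermitian_conjTranspose_mul_self B
  have hmap : Finset.univ.val.map (isHermitian_conjTranspose_mul_self D).eigenvalues
      = (Finset.univ.val.map hB.eigenvalues).map (1 + ·) := by
    apply Multiset.map_injective (RCLike.ofReal_injective (K := 𝕜))
    rw [← (isHermitian_conjTranspose_mul_self D).roots_charpoly_eq_map_ofReal,
      show Dᴴ * D = ((1 : ℝ) : 𝕜) • 1 + ((1 : ℝ) : 𝕜) • (Bᴴ * B) by simp [h],
      hB.roots_charpoly_smul_one_add_smul, hB.roots_charpoly_eq_map_ofReal]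
    simp [Multiset.map_map]
  obtain ⟨x, hx, hjx⟩ :=
    Multiset.mem_map.1 (hmap ▸ Multiset.mem_map_of_mem _ (Finset.mem_univ_val j))
  obtain ⟨k, -, rfl⟩ := Multiset.mem_map.1 hx
  linarith [eigenvalues_conjTranspose_mul_self_nonneg B k]

lemma fromBlocks_one_neg_one_mul_self :
    (fromBlocks 1 0 0 (-1) : Matrix (m ⊕ n) (m ⊕ n) 𝕜) * fromBlocks 1 0 0 (-1) = 1 := by
  simp [fromBlocks_multiply, ← fromBlocks_one]

lemma fromBlocks_add_conj_fromBlocks_one_neg_one (P : Matrix m m 𝕜) (Q : Matrix m n 𝕜)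
    (R : Matrix n m 𝕜) (S : Matrix n n 𝕜) :
    fromBlocks P Q R S + fromBlocks 1 0 0 (-1) * fromBlocks P Q R S * fromBlocks 1 0 0 (-1)
      = fromBlocks ((2 : 𝕜) • P) 0 0 ((2 : 𝕜) • S) := by
  simp [fromBlocks_multiply, fromBlocks_add, two_smul]

section PseudoUnitaryBlocks
variable {A : Matrix m m 𝕜} {B : Matrix m n 𝕜} {C : Matrix n m 𝕜} {D : Matrix n n 𝕜}

local notation "𝔾" => fromBlocks 1 0 0 (-1)

lemma conjTranspose_mul_self_blocks
    (hT : (fromBlocks A B C D)ᴴ * 𝔾 * fromBlocks A B C D = 𝔾) :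
    Aᴴ * A = 1 + Cᴴ * C ∧ Dᴴ * D = 1 + Bᴴ * B := by
  simp only [fromBlocks_conjTranspose, fromBlocks_multiply, Matrix.mul_one, Matrix.mul_zero,
    Matrix.mul_neg, Matrix.neg_mul, add_zero, zero_add, fromBlocks_inj] at hT
  obtain ⟨h₁, -, -, h₂⟩ := hT
  constructor
  · rw [← h₁]; abel
  · rw [← neg_neg (1 : Matrix n n 𝕜), ← h₂]; abel

lemma mul_conjTranspose_self_block
    (hT : (fromBlocks A B C D)ᴴ * 𝔾 * fromBlocks A B C D = 𝔾) :
    D * Dᴴ = 1 + C * Cᴴ := by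
  have h := mul_mul_conjTranspose_eq fromBlocks_one_neg_one_mul_self hT
  simp only [fromBlocks_conjTranspose, fromBlocks_multiply, Matrix.mul_one, Matrix.mul_zero,
    Matrix.mul_neg, Matrix.neg_mul, add_zero, zero_add, fromBlocks_inj] at h
  rw [← neg_neg (1 : Matrix n n 𝕜), ← h.2.2.2]; abel

lemma conjTranspose_mul_self_add_conj_eq_fromBlocks
    (hT : (fromBlocks A B C D)ᴴ * 𝔾 * fromBlocks A B C D = 𝔾) :
    (fromBlocks A B C D)ᴴ * fromBlocks A B C D
        + 𝔾 * ((fromBlocks A B C D)ᴴ * fromBlocks A B C D) * 𝔾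
      = fromBlocks (((2 : ℝ) : 𝕜) • 1 + ((4 : ℝ) : 𝕜) • (Cᴴ * C)) 0 0
          (((-2 : ℝ) : 𝕜) • 1 + ((4 : ℝ) : 𝕜) • (Dᴴ * D)) := by
  obtain ⟨hAA, hDD⟩ := conjTranspose_mul_self_blocks hT
  rw [fromBlocks_conjTranspose, fromBlocks_multiply, fromBlocks_add_conj_fromBlocks_one_neg_one,
    hAA, eq_sub_of_add_eq' hDD.symm]
  push_cast
  congr 1 <;> module

theorem map_add_inv_eigenvalues_conjTranspose_mul_self (hcard : Fintype.card n ≤ Fintype.card m)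
    (hT : (fromBlocks A B C D)ᴴ * 𝔾 * fromBlocks A B C D = 𝔾) :
    (Finset.univ.val.map (isHermitian_conjTranspose_mul_self (fromBlocks A B C D)).eigenvalues).map
        (fun x => x + x⁻¹)
      = (Finset.univ.val.map (isHermitian_conjTranspose_mul_self D).eigenvalues).map (4 * · - 2)
        + (Finset.univ.val.map (isHermitian_conjTranspose_mul_self D).eigenvalues).map (4 * · - 2)
        + Multiset.replicate (Fintype.card m - Fintype.card n) 2 := by
  set T := fromBlocks A B C D
  have hS := isHermitian_conjTranspose_mul_self T
  have hCC : C * Cᴴ = ((-1 : ℝ) : 𝕜) • 1 + ((1 : ℝ) : 𝕜) • (D * Dᴴ) := by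
    rw [mul_conjTranspose_self_block hT]; push_cast; module
  apply Multiset.map_injective (RCLike.ofReal_injective (K := 𝕜))
  rw [Multiset.map_map]
  calc _ = (cfc (fun x : ℝ => x + x⁻¹) (Tᴴ * T)).charpoly.roots := by
        rw [hS.roots_charpoly_cfc]; rfl
    _ = _ := by
      rw [hS.cfc_add_inv_eq_of_mul_eq_one
          (conjTranspose_mul_self_mul_conj_eq_one fromBlocks_one_neg_one_mul_self hT),
        conjTranspose_mul_self_add_conj_eq_fromBlocks hT, roots_charpoly_fromBlocks_zero,
        (isHermitian_conjTranspose_mul_self C).roots_charpoly_smul_one_add_smul,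
        (isHermitian_conjTranspose_mul_self D).roots_charpoly_smul_one_add_smul,
        roots_charpoly_conjTranspose_mul_self C hcard, hCC,
        (isHermitian_mul_conjTranspose_self D).roots_charpoly_smul_one_add_smul,
        charpoly_mul_comm, (isHermitian_conjTranspose_mul_self D).roots_charpoly_eq_map_ofReal]
      simp only [Multiset.map_add, Multiset.map_map, Multiset.map_replicate, Function.comp_def]
      push_cast
      have h₁ (x : 𝕜) : 2 + 4 * (-1 + 1 * x) = 4 * x - 2 := by ring
      have h₂ (x : 𝕜) : -2 + 4 * x = 4 * x - 2 := by ring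
      simp only [h₁, h₂, mul_zero, add_zero]
      exact add_right_comm _ _ _

end PseudoUnitaryBlocks

end Matrix

lemma add_inv_le_add_inv {x y : ℝ} (hy : 1 ≤ y) (hyx : y ≤ x) : y + y⁻¹ ≤ x + x⁻¹ := by
  have hy0 : 0 < y := by linarith
  have hx0 : 0 < x := by linarith
  have hxy : x + x⁻¹ - (y + y⁻¹) = (x - y) * (x * y - 1) / (x * y) := by
    field_simp
    ring
  rw [← sub_nonneg, hxy]
  exact div_nonneg (mul_nonneg (by linarith) (by nlinarith)) (by positivity)

section Rearrangement
variable {α : Type*} {n d : ℕ}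

def sortDesc [LinearOrder α] (v : Fin n → α) : Fin n → α := fun i => v (Tuple.sort v i.rev)

lemma antitone_sortDesc [LinearOrder α] (v : Fin n → α) : Antitone (sortDesc v) :=
  fun _ _ hij => Tuple.monotone_sort v (Fin.rev_le_rev.mpr hij)

lemma map_univ_sortDesc [LinearOrder α] (v : Fin n → α) :
    Finset.univ.val.map (sortDesc v) = Finset.univ.val.map v := by
  change Finset.univ.val.map (v ∘ (Fin.revPerm.trans (Tuple.sort v))) = _
  rw [← Multiset.map_map, Multiset.map_univ_val_equiv]

lemma Antitone.eq_of_map_univ_eq [LinearOrder α] {u w : Fin n → α} (hu : Antitone u)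
    (hw : Antitone w) (h : Finset.univ.val.map u = Finset.univ.val.map w) : u = w := by
  rw [Fin.univ_val_map, Fin.univ_val_map, Multiset.coe_eq_coe] at h
  exact List.ofFn_injective (h.eq_of_sortedGE hu.sortedGE_ofFn hw.sortedGE_ofFn)

lemma map_univ_comp_rev (v : Fin n → α) :
    Finset.univ.val.map (fun k : Fin n => v k.rev) = Finset.univ.val.map v := by
  change Finset.univ.val.map (v ∘ Fin.revPerm) = _
  rw [← Multiset.map_map, Multiset.map_univ_val_equiv]

lemma Antitone.apply_rev_eq_inv {Λ : Fin n → ℝ} (hΛ : Antitone Λ) (hpos : ∀ k, 0 < Λ k)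
    (hinv : Finset.univ.val.map (fun k => (Λ k)⁻¹) = Finset.univ.val.map Λ) (k : Fin n) :
    Λ k.rev = (Λ k)⁻¹ := by
  have h : (fun k : Fin n => (Λ k.rev)⁻¹) = Λ := by
    refine Antitone.eq_of_map_univ_eq (fun i j hij => ?_) hΛ ?_
    · exact inv_anti₀ (hpos _) (hΛ (Fin.rev_le_rev.mpr hij))
    · rw [← hinv]
      exact map_univ_comp_rev fun k => (Λ k)⁻¹
  rw [← congrFun h k, inv_inv]

def Fin.halve (k : Fin n) : Fin n := ⟨k / 2, (Nat.div_le_self _ _).trans_lt k.isLt⟩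

lemma Fin.halve_le_rev_halve (k : Fin n) : k.halve ≤ k.halve.rev := by
  rw [Fin.le_def, Fin.val_rev]; simp only [Fin.halve]; omega

lemma Fin.halve_mono : Monotone (Fin.halve (n := n)) :=
  fun _ _ hkl => Nat.div_le_div_right (c := 2) hkl

def Fin.zigzag (k : Fin n) : Fin n := if Even (k : ℕ) then k.halve else k.halve.rev

lemma Fin.zigzag_injective : Function.Injective (Fin.zigzag (n := n)) := by
  intro a b h
  simp only [Fin.zigzag] at h
  split_ifs at h with ha hb hb <;>
    simp only [Fin.ext_iff, Fin.halve, Fin.val_rev, Nat.even_iff] at h ha hb ⊢ <;> omega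

lemma map_univ_comp_halve {β : Type*} {F : Fin n → β} (hF : ∀ k, F k.rev = F k) :
    Finset.univ.val.map (F ∘ Fin.halve) = Finset.univ.val.map F := by
  have h : F ∘ Fin.halve = F ∘ Equiv.ofBijective _ Fin.zigzag_injective.bijective_of_finite := by
    funext k
    simp only [Function.comp_apply, Equiv.ofBijective_apply, Fin.zigzag]
    split_ifs <;> simp [hF]
  rw [h, ← Multiset.map_map, Multiset.map_univ_val_equiv]

lemma map_univ_eq_sum_singleton {ι : Type*} [Fintype ι] (f : ι → α) :
    Finset.univ.val.map f = ∑ i, ({f i} : Multiset α) :=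
  (Multiset.sum_map_singleton _).symm.trans (by rw [Multiset.map_map]; rfl)

def doublePad (p : Fin d → α) (a : α) (k : Fin n) : α :=
  if h : (k : ℕ) < 2 * d then p ⟨k / 2, by omega⟩ else a

lemma doublePad_apply_two_mul (p : Fin d → α) (a : α) (i : Fin d) (h : 2 * (i : ℕ) < n) :
    doublePad p a (⟨2 * i, h⟩ : Fin n) = p i := by
  simp [doublePad, i.isLt]

lemma antitone_doublePad [Preorder α] {p : Fin d → α} {a : α} (hp : Antitone p)
    (ha : ∀ j, a ≤ p j) : Antitone (doublePad (n := n) p a) := by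
  intro k l hkl
  have hkl' : (k : ℕ) ≤ l := hkl
  unfold doublePad
  split_ifs with hl hk hk
  · exact hp (show (k : ℕ) / 2 ≤ l / 2 from Nat.div_le_div_right hkl')
  · omega
  · exact ha _
  · exact le_rfl

lemma map_univ_doublePad (p : Fin d → α) (a : α) (h : 2 * d ≤ n) :
    Finset.univ.val.map (doublePad (n := n) p a)
      = Finset.univ.val.map p + Finset.univ.val.map p + Multiset.replicate (n - 2 * d) a := by
  let e : (Fin d × Fin 2) ⊕ Fin (n - 2 * d) ≃ Fin n :=
    (Equiv.sumCongr finProdFinEquiv (Equiv.refl _)).trans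
      (finSumFinEquiv.trans (finCongr (by omega)))
  have hl (j : Fin d) (b : Fin 2) : doublePad p a (e (Sum.inl (j, b))) = p j := by
    have := b.isLt
    simp only [e, doublePad, Equiv.trans_apply, Equiv.sumCongr_apply, Sum.map_inl,
      finSumFinEquiv_apply_left, finCongr_apply, Fin.val_cast, Fin.val_castAdd,
      finProdFinEquiv_apply_val, dif_pos (show (b : ℕ) + 2 * j < 2 * d by omega)]
    exact congrArg p (Fin.ext (by simp only; omega))
  have hr (j : Fin (n - 2 * d)) : doublePad p a (e (Sum.inr j)) = a := by
    simp [e, doublePad]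
    omega
  rw [← Multiset.map_univ_val_equiv e, Multiset.map_map]
  simp only [map_univ_eq_sum_singleton, Fintype.sum_sum_type, Fintype.sum_prod_type,
    Fin.sum_univ_two, Function.comp_apply, hl, hr, Finset.sum_add_distrib]
  simp only [Finset.sum_const, Finset.card_univ, Fintype.card_fin, Multiset.nsmul_singleton]

theorem add_inv_eq_of_map_add_inv_eq {L : Multiset ℝ} {Λ : Fin n → ℝ} {p : Fin d → ℝ}
    (hdn : 2 * d ≤ n) (hΛ : Antitone Λ) (hΛL : Finset.univ.val.map Λ = L)
    (hpos : ∀ x ∈ L, 0 < x) (hinv : L.map (·⁻¹) = L) (hp : Antitone p) (hp2 : ∀ j, 2 ≤ p j)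
    (h : L.map (fun x => x + x⁻¹)
      = Finset.univ.val.map p + Finset.univ.val.map p + Multiset.replicate (n - 2 * d) 2)
    (i : Fin d) : Λ (Fin.castLE (by omega) i) + (Λ (Fin.castLE (by omega) i))⁻¹ = p i := by
  subst hΛL
  rw [Multiset.map_map] at hinv h
  replace hpos (k : Fin n) : 0 < Λ k := hpos _ (Multiset.mem_map_of_mem _ (Finset.mem_univ_val k))
  set F : Fin n → ℝ := (fun x => x + x⁻¹) ∘ Λ
  have hrev (k : Fin n) : Λ k.rev = (Λ k)⁻¹ := hΛ.apply_rev_eq_inv hpos hinv k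
  have hsymm (k : Fin n) : F k.rev = F k := by
    simp only [F, Function.comp_apply, hrev, inv_inv, add_comm]
  have hone (k : Fin n) : 1 ≤ Λ k.halve := by
    have h := hΛ k.halve_le_rev_halve
    rw [hrev] at h
    by_contra! hlt
    linarith [(one_lt_inv₀ (hpos _)).mpr hlt]
  have hanti : Antitone (F ∘ Fin.halve) :=
    fun k l hkl => add_inv_le_add_inv (hone l) (hΛ (Fin.halve_mono hkl))
  have heq : F ∘ Fin.halve = doublePad p 2 :=
    hanti.eq_of_map_univ_eq (antitone_doublePad hp hp2)
      (by rw [map_univ_comp_halve hsymm, h, map_univ_doublePad _ _ hdn])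
  have hhalve : (⟨2 * i, by omega⟩ : Fin n).halve = Fin.castLE (by omega) i :=
    Fin.ext (by simp [Fin.halve])
  have := congrFun heq ⟨2 * i, by omega⟩
  rwa [Function.comp_apply, hhalve, doublePad_apply_two_mul] at this

end Rearrangement

lemma sqrt_eq_add_inv_div_two {x y : ℝ} (hx : 0 < x) (h : x + x⁻¹ = 4 * y - 2) :
    √y = (√x + (√x)⁻¹) / 2 := by
  have hy : y = ((√x + (√x)⁻¹) / 2) ^ 2 := by
    have h' : x ^ 2 + 1 = (4 * y - 2) * x := by
      field_simp at h
      linarith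
    field_simp
    rw [Real.sq_sqrt hx.le]
    linear_combination -h'
  rw [hy, Real.sqrt_sq (by positivity)]

/-- For `T = [[A,B],[C,D]] ∈ U(c,d)` with `c ≥ d`, the singular values of the corner
block satisfy `σ_i(D) = (σ_i(T) + σ_i(T)⁻¹)/2` for `i = 1, …, d`. -/
theorem stmt5 (c d : ℕ) (hcd : d ≤ c) (A : Matrix (Fin c) (Fin c) ℂ)
    (B : Matrix (Fin c) (Fin d) ℂ) (C : Matrix (Fin d) (Fin c) ℂ) (D : Matrix (Fin d) (Fin d) ℂ)
    (hT : Matrix.fromBlocks A B C D ∈ pseudoU c d) :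
    ∀ i : Fin d,
      sv D i =
        (svS (Matrix.fromBlocks A B C D) (Fin.castLE (Nat.le_add_left d c) i) +
          (svS (Matrix.fromBlocks A B C D) (Fin.castLE (Nat.le_add_left d c) i))⁻¹) / 2 := by
  intro i
  have hG : (fromBlocks 1 0 0 (-1) : Matrix (Fin c ⊕ Fin d) (Fin c ⊕ Fin d) ℂ) *
      fromBlocks 1 0 0 (-1) = 1 := fromBlocks_one_neg_one_mul_self
  have hS := isHermitian_conjTranspose_mul_self (fromBlocks A B C D)
  have hDD := isHermitian_conjTranspose_mul_self D
  have hL := (map_univ_sortDesc _).trans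
    (map_eigenvalues_conjTranspose_mul_self_submatrix (fromBlocks A B C D) finSumFinEquiv.symm)
  have hpos : ∀ x ∈ Finset.univ.val.map hS.eigenvalues, 0 < x :=
    Multiset.forall_mem_map_iff.mpr fun j _ =>
      eigenvalues_conjTranspose_mul_self_pos (isUnit_of_conjTranspose_mul_mul_eq hG hT) j
  have hone (j : Fin d) : 1 ≤ sortDesc hDD.eigenvalues j :=
    one_le_eigenvalues_conjTranspose_mul_self (conjTranspose_mul_self_blocks hT).2 _
  have key := add_inv_eq_of_map_add_inv_eq (p := fun j => 4 * sortDesc hDD.eigenvalues j - 2)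
    (by omega) (antitone_sortDesc _) hL hpos (map_inv_eigenvalues_conjTranspose_mul_self hG hT)
    (fun j k hjk => by linarith [antitone_sortDesc hDD.eigenvalues hjk])
    (fun j => by linarith [hone j])
    (by
      rw [map_add_inv_eigenvalues_conjTranspose_mul_self (by simpa using hcd) hT,
        ← map_univ_sortDesc, Multiset.map_map, Fintype.card_fin, Fintype.card_fin,
        show c - d = c + d - 2 * d by omega]
      rfl) i
  -- `sv D i` and `svS T k` unfold to square roots of `sortDesc` of the eigenvalues.
  exact sqrt_eq_add_inv_div_two
    (hpos _ (hL ▸ Multiset.mem_map_of_mem _ (Finset.mem_univ_val _))) key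

end
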